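/- Let G be a nonempty type and let f, g : (ℝ² → G) → ℝ be cylindrical functions, i.e. there exists a finite set P ⊆ ℝ² such that f(s) = f(s') and g(s) = g(s') whenever s, s' : ℝ² → G agree on P. Suppose that for every m ∈ ℕ, f and g agree on every level-m configuration (every s : ℝ² → G with s(p) = s(q) whenever L_m(p) = L_m(q)). Then f = g on all of (ℝ² → G). That is, two cylindrical functions of the continuum are different if and only if their regularizations to some sufficiently fine scale are different. -/

import Mathlib

/-!
Finitely many distinct points of the plane get distinct dyadic labels at a fine enough level
`M`. Given any `s`, the function `s ∘ r ∘ L_M`, where `r` picks back the point of `P` carrying a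
given label, is a level-`M` configuration that agrees with `s` on `P`; so `f s` and `g s` are the
values of `f` and `g` at a level-`M` configuration, where they agree.
-/

open Filter Set Function

/-- The level-`m` dyadic label map `L_m : ℝ² → ℤ²`. -/
noncomputable def dyadicLabel (m : ℕ) (p : ℝ × ℝ) : ℤ × ℤ :=
  (⌊(2 : ℝ) ^ m * p.1⌋, ⌊(2 : ℝ) ^ m * p.2⌋)

theorem eventually_floor_mul_ne_floor_mul {ι : Type*} {l : Filter ι} {r : ι → ℝ}
    (hr : Tendsto r l atTop) {a b : ℝ} (hab : a ≠ b) :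
    ∀ᶠ i in l, ⌊r i * a⌋ ≠ ⌊r i * b⌋ := by
  have hgap : Tendsto (fun i => r i * |a - b|) l atTop :=
    hr.atTop_mul_const (abs_pos.2 (sub_ne_zero.2 hab))
  filter_upwards [hgap.eventually_ge_atTop 1] with i hi hfloor
  have hclose := Int.abs_sub_lt_one_of_floor_eq_floor hfloor
  rw [← mul_sub, abs_mul] at hclose
  nlinarith [le_abs_self (r i), abs_nonneg (a - b)]

theorem eventually_dyadicLabel_ne {p q : ℝ × ℝ} (hpq : p ≠ q) :
    ∀ᶠ m in atTop, dyadicLabel m p ≠ dyadicLabel m q := by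
  have h2 := tendsto_pow_atTop_atTop_of_one_lt (one_lt_two (α := ℝ))
  rcases eq_or_ne p.1 q.1 with h1 | h1
  · filter_upwards [eventually_floor_mul_ne_floor_mul h2 fun h => hpq (Prod.ext h1 h)]
      with m hm heq using hm (congrArg Prod.snd heq)
  · filter_upwards [eventually_floor_mul_ne_floor_mul h2 h1]
      with m hm heq using hm (congrArg Prod.fst heq)

theorem eventually_injOn_dyadicLabel (P : Finset (ℝ × ℝ)) :
    ∀ᶠ m in atTop, InjOn (dyadicLabel m) P := by
  have hsep : ∀ᶠ m in atTop, ∀ p ∈ P, ∀ q ∈ P, p ≠ q → dyadicLabel m p ≠ dyadicLabel m q := by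
    simp only [eventually_all_finset, eventually_imp_distrib_left]
    exact fun p _ q _ hpq => eventually_dyadicLabel_ne hpq
  filter_upwards [hsep] with m hm p hp q hq heq
  by_contra hpq
  exact hm p hp q hq hpq heq

theorem cylindrical_eq_of_eq_on_effective_general (G : Type*)
    (f g : ((ℝ × ℝ) → G) → ℝ)
    (hcyl : ∃ P : Finset (ℝ × ℝ),
      (∀ s s' : (ℝ × ℝ) → G, (∀ p ∈ P, s p = s' p) → f s = f s') ∧
      (∀ s s' : (ℝ × ℝ) → G, (∀ p ∈ P, s p = s' p) → g s = g s'))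
    (heff : ∀ m : ℕ, ∀ s : (ℝ × ℝ) → G,
      (∀ p q : ℝ × ℝ, dyadicLabel m p = dyadicLabel m q → s p = s q) → f s = g s) :
    f = g := by
  obtain ⟨P, hf, hg⟩ := hcyl
  obtain ⟨M, hM⟩ := (eventually_injOn_dyadicLabel P).exists
  funext s
  set s' := s ∘ invFunOn (dyadicLabel M) P ∘ dyadicLabel M
  have hagree : ∀ p ∈ P, s p = s' p := fun p hp =>
    congrArg s (hM.leftInvOn_invFunOn hp).symm
  calc f s = f s' := hf s s' hagree
    _ = g s' := heff M s' fun p q hpq => by simp only [s', comp_apply, hpq]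
    _ = g s := (hg s s' hagree).symm

/-- Two cylindrical functions of the continuum that have equal regularizations to every
dyadic scale (i.e. agree on all level-`m` configurations for every `m`) are equal. -/
theorem cylindrical_eq_of_eq_on_effective (G : Type*) [Nonempty G]
    (f g : ((ℝ × ℝ) → G) → ℝ)
    (hcyl : ∃ P : Finset (ℝ × ℝ),
      (∀ s s' : (ℝ × ℝ) → G, (∀ p ∈ P, s p = s' p) → f s = f s') ∧
      (∀ s s' : (ℝ × ℝ) → G, (∀ p ∈ P, s p = s' p) → g s = g s'))
    (heff : ∀ m : ℕ, ∀ s : (ℝ × ℝ) → G,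
      (∀ p q : ℝ × ℝ, dyadicLabel m p = dyadicLabel m q → s p = s q) → f s = g s) :
    f = g :=
  cylindrical_eq_of_eq_on_effective_general G f g hcyl heff
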